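/- In the double category Psa₂(T) of pseudo algebras, the horizontal composite of two coherent double cells is coherent: given lax morphisms (f,φ), (f',φ'), (g,γ), (g',γ'), colax morphisms (r,ρ), (s,σ), (t,τ), and 2-cells π : sf ⟶ gr and θ : tf' ⟶ g's satisfying the coherence condition (coh), the pasted cell (θ ▷ f) ≫ (g' ◁ π) : t f' f ⟶ g' g r also satisfies (coh) with respect to the composite lax morphisms f'f, g'g and the colax morphisms r, t. -/
import Mathlib


open CategoryTheory Bicategory

universe w v u

variable {C : Type u} [Bicategory.{w, v} C] [Bicategory.Strict C]

/-- A (strict) 2-monad `(T, h, m)` on a strict 2-category `C`. -/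
structure TwoMonad (C : Type u) [Bicategory.{w, v} C] [Bicategory.Strict C] where
  obj : C → C
  map : ∀ {a b : C}, (a ⟶ b) → (obj a ⟶ obj b)
  map₂ : ∀ {a b : C} {f g : a ⟶ b}, (f ⟶ g) → (map f ⟶ map g)
  map_id : ∀ a : C, map (𝟙 a) = 𝟙 (obj a)
  map_comp : ∀ {a b c : C} (f : a ⟶ b) (g : b ⟶ c), map (f ≫ g) = map f ≫ map g
  map₂_id : ∀ {a b : C} (f : a ⟶ b), map₂ (𝟙 f) = 𝟙 (map f)
  map₂_comp : ∀ {a b : C} {f g h : a ⟶ b} (η : f ⟶ g) (θ : g ⟶ h),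
    map₂ (η ≫ θ) = map₂ η ≫ map₂ θ
  map₂_whiskerLeft : ∀ {a b c : C} (f : a ⟶ b) {g h : b ⟶ c} (η : g ⟶ h),
    map₂ (f ◁ η) = eqToHom (map_comp f g) ≫ (map f ◁ map₂ η) ≫ eqToHom (map_comp f h).symm
  map₂_whiskerRight : ∀ {a b c : C} {f g : a ⟶ b} (η : f ⟶ g) (h : b ⟶ c),
    map₂ (η ▷ h) = eqToHom (map_comp f h) ≫ (map₂ η ▷ map h) ≫ eqToHom (map_comp g h).symm
  unit : ∀ a : C, a ⟶ obj a
  mult : ∀ a : C, obj (obj a) ⟶ obj a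
  unit_nat : ∀ {a b : C} (f : a ⟶ b), unit a ≫ map f = f ≫ unit b
  mult_nat : ∀ {a b : C} (f : a ⟶ b), mult a ≫ map f = map (map f) ≫ mult b
  unit_nat₂ : ∀ {a b : C} {f g : a ⟶ b} (η : f ⟶ g),
    unit a ◁ map₂ η = eqToHom (unit_nat f) ≫ (η ▷ unit b) ≫ eqToHom (unit_nat g).symm
  mult_nat₂ : ∀ {a b : C} {f g : a ⟶ b} (η : f ⟶ g),
    mult a ◁ map₂ η =
      eqToHom (mult_nat f) ≫ (map₂ (map₂ η) ▷ mult b) ≫ eqToHom (mult_nat g).symm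
  unit_mult : ∀ a : C, unit (obj a) ≫ mult a = 𝟙 (obj a)
  map_unit_mult : ∀ a : C, map (unit a) ≫ mult a = 𝟙 (obj a)
  mult_assoc : ∀ a : C, map (mult a) ≫ mult a = mult (obj a) ≫ mult a

/-- A pseudo algebra `(A, a, ω, κ)` for a 2-monad `T`: a structure 1-cell
`a : TA ⟶ A`, an invertible normaliser `ω : 1_A ≅ a ∘ hA` and an invertible extended
associator `κ : a ∘ Ta ≅ a ∘ mA`, subject to the coherence conditions
`(a ◁ Tω) ≫ (κ ▷ ThA) = 1_a = (ω ▷ a) ≫ (κ ▷ hTA)` and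
`(κ ▷ T²a) ≫ (κ ▷ mTA) = (a ◁ Tκ) ≫ (κ ▷ TmA)`. -/
structure PsAlg (T : TwoMonad C) where
  A : C
  a : T.obj A ⟶ A
  ω : 𝟙 A ≅ T.unit A ≫ a
  κ : T.map a ≫ a ≅ T.mult A ≫ a
  coh_unit₁ :
    eqToHom (show a = T.map (𝟙 A) ≫ a by rw [T.map_id, Category.id_comp]) ≫
      (T.map₂ ω.hom ▷ a) ≫
      eqToHom (show T.map (T.unit A ≫ a) ≫ a = T.map (T.unit A) ≫ T.map a ≫ a by
        rw [T.map_comp, Category.assoc]) ≫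
      (T.map (T.unit A) ◁ κ.hom) ≫
      eqToHom (show T.map (T.unit A) ≫ T.mult A ≫ a = a by
        rw [← Category.assoc, T.map_unit_mult, Category.id_comp]) = 𝟙 a
  coh_unit₂ :
    eqToHom (show a = a ≫ 𝟙 A by rw [Category.comp_id]) ≫
      (a ◁ ω.hom) ≫
      eqToHom (show a ≫ T.unit A ≫ a = T.unit (T.obj A) ≫ T.map a ≫ a by
        rw [← Category.assoc, ← T.unit_nat a, Category.assoc]) ≫
      (T.unit (T.obj A) ◁ κ.hom) ≫
      eqToHom (show T.unit (T.obj A) ≫ T.mult A ≫ a = a by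
        rw [← Category.assoc, T.unit_mult, Category.id_comp]) = 𝟙 a
  coh_assoc :
    (T.map (T.map a) ◁ κ.hom) ≫
      eqToHom (show T.map (T.map a) ≫ T.mult A ≫ a = T.mult (T.obj A) ≫ T.map a ≫ a by
        rw [← Category.assoc, ← T.mult_nat a, Category.assoc]) ≫
      (T.mult (T.obj A) ◁ κ.hom) =
    eqToHom (show T.map (T.map a) ≫ T.map a ≫ a = T.map (T.map a ≫ a) ≫ a by
        rw [T.map_comp, Category.assoc]) ≫
      (T.map₂ κ.hom ▷ a) ≫
      eqToHom (show T.map (T.mult A ≫ a) ≫ a = T.map (T.mult A) ≫ T.map a ≫ a by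
        rw [T.map_comp, Category.assoc]) ≫
      (T.map (T.mult A) ◁ κ.hom) ≫
      eqToHom (show T.map (T.mult A) ≫ T.mult A ≫ a = T.mult (T.obj A) ≫ T.mult A ≫ a by
        rw [← Category.assoc, T.mult_assoc, Category.assoc])

variable {T : TwoMonad C}

/-- `(f, φ)` is a lax morphism of pseudo algebras `(𝒜.a) → (ℬ.a)`:
`φ : b ∘ Tf ⟶ f ∘ a` satisfies the unit and associativity coherence conditions. -/
def IsLax (T : TwoMonad C) (𝒜 ℬ : PsAlg T) (f : 𝒜.A ⟶ ℬ.A)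
    (φ : T.map f ≫ ℬ.a ⟶ 𝒜.a ≫ f) : Prop :=
  (eqToHom (show f = f ≫ 𝟙 ℬ.A by simp) ≫ (f ◁ ℬ.ω.hom) ≫
      eqToHom (show f ≫ T.unit ℬ.A ≫ ℬ.a = T.unit 𝒜.A ≫ T.map f ≫ ℬ.a by
        rw [← Category.assoc, ← T.unit_nat f, Category.assoc]) ≫
      (T.unit 𝒜.A ◁ φ) =
    eqToHom (show f = 𝟙 𝒜.A ≫ f by simp) ≫ (𝒜.ω.hom ▷ f) ≫
      eqToHom (show (T.unit 𝒜.A ≫ 𝒜.a) ≫ f = T.unit 𝒜.A ≫ 𝒜.a ≫ f by simp)) ∧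
  ((T.map (T.map f) ◁ ℬ.κ.hom) ≫
      eqToHom (show T.map (T.map f) ≫ T.mult ℬ.A ≫ ℬ.a = T.mult 𝒜.A ≫ T.map f ≫ ℬ.a by
        rw [← Category.assoc, ← T.mult_nat f, Category.assoc]) ≫
      (T.mult 𝒜.A ◁ φ) =
    eqToHom (show T.map (T.map f) ≫ T.map ℬ.a ≫ ℬ.a = T.map (T.map f ≫ ℬ.a) ≫ ℬ.a by
        rw [T.map_comp, Category.assoc]) ≫
      (T.map₂ φ ▷ ℬ.a) ≫
      eqToHom (show T.map (𝒜.a ≫ f) ≫ ℬ.a = T.map 𝒜.a ≫ T.map f ≫ ℬ.a by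
        rw [T.map_comp, Category.assoc]) ≫
      (T.map 𝒜.a ◁ φ) ≫
      eqToHom (show T.map 𝒜.a ≫ 𝒜.a ≫ f = (T.map 𝒜.a ≫ 𝒜.a) ≫ f by simp) ≫
      (𝒜.κ.hom ▷ f) ≫
      eqToHom (show (T.mult 𝒜.A ≫ 𝒜.a) ≫ f = T.mult 𝒜.A ≫ 𝒜.a ≫ f by simp))

/-- `(r, ρ)` is a colax morphism of pseudo algebras:
`ρ : r ∘ a ⟶ b ∘ Tr` satisfies the unit and associativity coherence conditions. -/
def IsColax (T : TwoMonad C) (𝒜 ℬ : PsAlg T) (r : 𝒜.A ⟶ ℬ.A)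
    (ρ : 𝒜.a ≫ r ⟶ T.map r ≫ ℬ.a) : Prop :=
  (eqToHom (show r = 𝟙 𝒜.A ≫ r by simp) ≫ (𝒜.ω.hom ▷ r) ≫
      eqToHom (show (T.unit 𝒜.A ≫ 𝒜.a) ≫ r = T.unit 𝒜.A ≫ 𝒜.a ≫ r by simp) ≫
      (T.unit 𝒜.A ◁ ρ) ≫
      eqToHom (show T.unit 𝒜.A ≫ T.map r ≫ ℬ.a = r ≫ T.unit ℬ.A ≫ ℬ.a by
        rw [← Category.assoc, T.unit_nat r, Category.assoc]) =
    eqToHom (show r = r ≫ 𝟙 ℬ.A by simp) ≫ (r ◁ ℬ.ω.hom)) ∧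
  (eqToHom (show T.map 𝒜.a ≫ 𝒜.a ≫ r = (T.map 𝒜.a ≫ 𝒜.a) ≫ r by simp) ≫
      (𝒜.κ.hom ▷ r) ≫
      eqToHom (show (T.mult 𝒜.A ≫ 𝒜.a) ≫ r = T.mult 𝒜.A ≫ 𝒜.a ≫ r by simp) ≫
      (T.mult 𝒜.A ◁ ρ) =
    (T.map 𝒜.a ◁ ρ) ≫
      eqToHom (show T.map 𝒜.a ≫ T.map r ≫ ℬ.a = T.map (𝒜.a ≫ r) ≫ ℬ.a by
        rw [T.map_comp, Category.assoc]) ≫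
      (T.map₂ ρ ▷ ℬ.a) ≫
      eqToHom (show T.map (T.map r ≫ ℬ.a) ≫ ℬ.a = T.map (T.map r) ≫ T.map ℬ.a ≫ ℬ.a by
        rw [T.map_comp, Category.assoc]) ≫
      (T.map (T.map r) ◁ ℬ.κ.hom) ≫
      eqToHom (show T.map (T.map r) ≫ T.mult ℬ.A ≫ ℬ.a = T.mult 𝒜.A ≫ T.map r ≫ ℬ.a by
        rw [← Category.assoc, ← T.mult_nat r, Category.assoc]))

/-- The comparison 2-cell of the composite of two lax morphisms:
`c ∘ T(gf) ⟶ g ∘ b ∘ Tf ⟶ g ∘ f ∘ a`. -/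
def compLax {𝒜 ℬ 𝒞 : PsAlg T} (f : 𝒜.A ⟶ ℬ.A) (g : ℬ.A ⟶ 𝒞.A)
    (φ : T.map f ≫ ℬ.a ⟶ 𝒜.a ≫ f) (γ : T.map g ≫ 𝒞.a ⟶ ℬ.a ≫ g) :
    T.map (f ≫ g) ≫ 𝒞.a ⟶ 𝒜.a ≫ (f ≫ g) :=
  eqToHom (show T.map (f ≫ g) ≫ 𝒞.a = T.map f ≫ T.map g ≫ 𝒞.a by
      rw [T.map_comp, Category.assoc]) ≫
    (T.map f ◁ γ) ≫
    eqToHom (show T.map f ≫ ℬ.a ≫ g = (T.map f ≫ ℬ.a) ≫ g by simp) ≫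
    (φ ▷ g) ≫ eqToHom (show (𝒜.a ≫ f) ≫ g = 𝒜.a ≫ f ≫ g by simp)

/-- The comparison 2-cell of the composite of two colax morphisms. -/
def compColax {𝒜 ℬ 𝒞 : PsAlg T} (r : 𝒜.A ⟶ ℬ.A) (s : ℬ.A ⟶ 𝒞.A)
    (ρ : 𝒜.a ≫ r ⟶ T.map r ≫ ℬ.a) (σ : ℬ.a ≫ s ⟶ T.map s ≫ 𝒞.a) :
    𝒜.a ≫ (r ≫ s) ⟶ T.map (r ≫ s) ≫ 𝒞.a :=
  eqToHom (show 𝒜.a ≫ r ≫ s = (𝒜.a ≫ r) ≫ s by simp) ≫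
    (ρ ▷ s) ≫
    eqToHom (show (T.map r ≫ ℬ.a) ≫ s = T.map r ≫ ℬ.a ≫ s by simp) ≫
    (T.map r ◁ σ) ≫
    eqToHom (show T.map r ≫ T.map s ≫ 𝒞.a = T.map (r ≫ s) ≫ 𝒞.a by
      rw [T.map_comp, Category.assoc])

/-- The identity lax (or colax) comparison on the identity morphism of a pseudo algebra. -/
def idLax (𝒜 : PsAlg T) : T.map (𝟙 𝒜.A) ≫ 𝒜.a ⟶ 𝒜.a ≫ 𝟙 𝒜.A :=
  eqToHom (by rw [T.map_id, Category.id_comp, Category.comp_id])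

/-- The identity colax comparison on the identity morphism of a pseudo algebra. -/
def idColax (𝒜 : PsAlg T) : 𝒜.a ≫ 𝟙 𝒜.A ⟶ T.map (𝟙 𝒜.A) ≫ 𝒜.a :=
  eqToHom (by rw [T.map_id, Category.id_comp, Category.comp_id])

/-- The coherence condition (coh) for a double cell `π : sf ⟶ gr` of pseudo algebras,
with lax morphisms `(f, φ), (g, γ)` and colax morphisms `(r, ρ), (s, σ)`:
`(s ◁ φ) ≫ (π ▷ a) ≫ (g ◁ ρ) = (σ ▷ Tf) ≫ (d ◁ Tπ) ≫ (γ ▷ Tr)`. -/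
def Coh (𝒜 ℬ 𝒞 𝒟 : PsAlg T) (f : 𝒜.A ⟶ ℬ.A) (g : 𝒞.A ⟶ 𝒟.A) (r : 𝒜.A ⟶ 𝒞.A)
    (s : ℬ.A ⟶ 𝒟.A)
    (φ : T.map f ≫ ℬ.a ⟶ 𝒜.a ≫ f) (γ : T.map g ≫ 𝒟.a ⟶ 𝒞.a ≫ g)
    (ρ : 𝒜.a ≫ r ⟶ T.map r ≫ 𝒞.a) (σ : ℬ.a ≫ s ⟶ T.map s ≫ 𝒟.a)
    (π : f ≫ s ⟶ r ≫ g) : Prop :=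
  eqToHom (show T.map f ≫ ℬ.a ≫ s = (T.map f ≫ ℬ.a) ≫ s by simp) ≫ (φ ▷ s) ≫
      eqToHom (show (𝒜.a ≫ f) ≫ s = 𝒜.a ≫ f ≫ s by simp) ≫ (𝒜.a ◁ π) ≫
      eqToHom (show 𝒜.a ≫ r ≫ g = (𝒜.a ≫ r) ≫ g by simp) ≫ (ρ ▷ g) ≫
      eqToHom (show (T.map r ≫ 𝒞.a) ≫ g = T.map r ≫ 𝒞.a ≫ g by simp) =
  (T.map f ◁ σ) ≫
      eqToHom (show T.map f ≫ T.map s ≫ 𝒟.a = T.map (f ≫ s) ≫ 𝒟.a by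
        rw [T.map_comp, Category.assoc]) ≫
      (T.map₂ π ▷ 𝒟.a) ≫
      eqToHom (show T.map (r ≫ g) ≫ 𝒟.a = T.map r ≫ T.map g ≫ 𝒟.a by
        rw [T.map_comp, Category.assoc]) ≫
      (T.map r ◁ γ)

/-- Horizontal pasting of quintet-type double cells. -/
def hCompCell {A B B' Cc D D' : C} {f : A ⟶ B} {f' : B ⟶ B'} {r : A ⟶ Cc} {s : B ⟶ D}
    {t : B' ⟶ D'} {g : Cc ⟶ D} {g' : D ⟶ D'}
    (π : f ≫ s ⟶ r ≫ g) (θ : f' ≫ t ⟶ s ≫ g') :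
    (f ≫ f') ≫ t ⟶ r ≫ (g ≫ g') :=
  eqToHom (by simp) ≫ f ◁ θ ≫ eqToHom (by simp) ≫ π ▷ g' ≫ eqToHom (by simp)

/-- Vertical pasting of quintet-type double cells. -/
def vCompCell {A B Cc D E F : C} {f : A ⟶ B} {s : B ⟶ D} {r : A ⟶ Cc} {g : Cc ⟶ D}
    {s' : D ⟶ F} {r' : Cc ⟶ E} {h : E ⟶ F}
    (π : f ≫ s ⟶ r ≫ g) (ζ : g ≫ s' ⟶ r' ≫ h) :
    f ≫ (s ≫ s') ⟶ (r ≫ r') ≫ h :=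
  eqToHom (by simp) ≫ π ▷ s' ≫ eqToHom (by simp) ≫ r ◁ ζ ≫ eqToHom (by simp)


theorem map₂_eqToHom (T : TwoMonad C) {a b : C} {f g : a ⟶ b} (h : f = g) :
    T.map₂ (eqToHom h) = eqToHom (congrArg T.map h) := by
  cases h; simp [T.map₂_id]

theorem wL_congr {a b c : C} {x y : a ⟶ b} (h : x = y) {u v : b ⟶ c} (η : u ⟶ v) :
    x ◁ η = eqToHom (by rw [h]) ≫ y ◁ η ≫ eqToHom (by rw [h]) := by
  subst h; simp

/-- In the double category `Psa₂(T)` of pseudo algebras, the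
horizontal composite of two coherent double cells is coherent: given coherent cells
`π : sf ⟶ gr` and `θ : tf' ⟶ g's` (with lax morphisms `f, f', g, g'` and colax
morphisms `r, s, t`), the pasted cell `(θ ▷ f) ≫ (g' ◁ π) : t f' f ⟶ g' g r` satisfies
the coherence condition with respect to the composite lax morphisms `f'f`, `g'g` and
the colax morphisms `r, t`. -/
theorem hComp_coherent {𝒜 ℬ ℬ' 𝒞 𝒟 𝒟' : PsAlg T}
    {f : 𝒜.A ⟶ ℬ.A} {f' : ℬ.A ⟶ ℬ'.A} {g : 𝒞.A ⟶ 𝒟.A} {g' : 𝒟.A ⟶ 𝒟'.A}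
    {r : 𝒜.A ⟶ 𝒞.A} {s : ℬ.A ⟶ 𝒟.A} {t : ℬ'.A ⟶ 𝒟'.A}
    {φ : T.map f ≫ ℬ.a ⟶ 𝒜.a ≫ f} {φ' : T.map f' ≫ ℬ'.a ⟶ ℬ.a ≫ f'}
    {γ : T.map g ≫ 𝒟.a ⟶ 𝒞.a ≫ g} {γ' : T.map g' ≫ 𝒟'.a ⟶ 𝒟.a ≫ g'}
    {ρ : 𝒜.a ≫ r ⟶ T.map r ≫ 𝒞.a} {σ : ℬ.a ≫ s ⟶ T.map s ≫ 𝒟.a}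
    {τ : ℬ'.a ≫ t ⟶ T.map t ≫ 𝒟'.a}
    (hf : IsLax T 𝒜 ℬ f φ) (hf' : IsLax T ℬ ℬ' f' φ')
    (hg : IsLax T 𝒞 𝒟 g γ) (hg' : IsLax T 𝒟 𝒟' g' γ')
    (hr : IsColax T 𝒜 𝒞 r ρ) (hs : IsColax T ℬ 𝒟 s σ) (ht : IsColax T ℬ' 𝒟' t τ)
    (π : f ≫ s ⟶ r ≫ g) (θ : f' ≫ t ⟶ s ≫ g')
    (hπ : Coh 𝒜 ℬ 𝒞 𝒟 f g r s φ γ ρ σ π)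
    (hθ : Coh ℬ ℬ' 𝒟 𝒟' f' g' s t φ' γ' σ τ θ) :
    Coh 𝒜 ℬ' 𝒞 𝒟' (f ≫ f') (g ≫ g') r t
      (compLax f f' φ φ') (compLax g g' γ γ') ρ τ (hCompCell π θ) := by
  simp only [Coh] at hπ hθ
  simp only [Coh, compLax, hCompCell]
  rw [T.map₂_comp, T.map₂_comp, T.map₂_comp, T.map₂_comp, T.map₂_whiskerLeft,
    T.map₂_whiskerRight, map₂_eqToHom, map₂_eqToHom, map₂_eqToHom,
    wL_congr (T.map_comp f f') τ]
  simp only [Bicategory.whiskerLeft_comp, Bicategory.comp_whiskerRight,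
    Bicategory.comp_whiskerLeft, Bicategory.whisker_assoc, Bicategory.whiskerRight_comp,
    Bicategory.Strict.associator_eqToIso, eqToIso.hom, eqToIso.inv,
    Bicategory.whiskerLeft_eqToHom, Bicategory.eqToHom_whiskerRight,
    eqToHom_trans, eqToHom_refl, eqToHom_trans_assoc, Category.assoc,
    Category.comp_id, Category.id_comp]
  trans (eqToHom (show T.map (f ≫ f') ≫ ℬ'.a ≫ t = T.map f ≫ (T.map f' ≫ ℬ'.a) ≫ t by
        simp [T.map_comp]) ≫
      (T.map f ◁ (φ' ▷ t)) ≫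
      eqToHom (show T.map f ≫ (ℬ.a ≫ f') ≫ t = (T.map f ≫ ℬ.a) ≫ (f' ≫ t) by simp) ≫
      (φ ▷ (f' ≫ t) ≫ (𝒜.a ≫ f) ◁ θ) ≫
      eqToHom (show (𝒜.a ≫ f) ≫ (s ≫ g') = 𝒜.a ≫ ((f ≫ s) ≫ g') by simp) ≫
      (𝒜.a ◁ (π ▷ g')) ≫
      eqToHom (show 𝒜.a ≫ ((r ≫ g) ≫ g') = (𝒜.a ≫ r) ≫ (g ≫ g') by simp) ≫
      (ρ ▷ (g ≫ g')) ≫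
      eqToHom (show (T.map r ≫ 𝒞.a) ≫ (g ≫ g') = T.map r ≫ 𝒞.a ≫ (g ≫ g') by simp))
  · simp only [Bicategory.whiskerLeft_comp, Bicategory.comp_whiskerRight,
      Bicategory.comp_whiskerLeft, Bicategory.whisker_assoc, Bicategory.whiskerRight_comp,
      Bicategory.Strict.associator_eqToIso, eqToIso.hom, eqToIso.inv,
      Bicategory.whiskerLeft_eqToHom, Bicategory.eqToHom_whiskerRight,
      eqToHom_trans, eqToHom_refl, eqToHom_trans_assoc, Category.assoc,
      Category.comp_id, Category.id_comp]
  rw [← whisker_exchange φ θ]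
  trans (eqToHom (show T.map (f ≫ f') ≫ ℬ'.a ≫ t = T.map f ≫ (T.map f' ≫ ℬ'.a) ≫ t by
        simp [T.map_comp]) ≫
      (T.map f ◁ (φ' ▷ t)) ≫
      eqToHom (show T.map f ≫ (ℬ.a ≫ f') ≫ t = (T.map f ≫ ℬ.a) ≫ (f' ≫ t) by simp) ≫
      ((T.map f ≫ ℬ.a) ◁ θ) ≫
      eqToHom (show (T.map f ≫ ℬ.a) ≫ (s ≫ g') = (T.map f ≫ ℬ.a ≫ s) ≫ g' by simp) ≫
      ((eqToHom (show T.map f ≫ ℬ.a ≫ s = (T.map f ≫ ℬ.a) ≫ s by simp) ≫ (φ ▷ s) ≫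
          eqToHom (show (𝒜.a ≫ f) ≫ s = 𝒜.a ≫ f ≫ s by simp) ≫ (𝒜.a ◁ π) ≫
          eqToHom (show 𝒜.a ≫ r ≫ g = (𝒜.a ≫ r) ≫ g by simp) ≫ (ρ ▷ g) ≫
          eqToHom (show (T.map r ≫ 𝒞.a) ≫ g = T.map r ≫ 𝒞.a ≫ g by simp)) ▷ g') ≫
      eqToHom (show (T.map r ≫ 𝒞.a ≫ g) ≫ g' = T.map r ≫ 𝒞.a ≫ (g ≫ g') by simp))
  · simp only [Bicategory.whiskerLeft_comp, Bicategory.comp_whiskerRight,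
      Bicategory.comp_whiskerLeft, Bicategory.whisker_assoc, Bicategory.whiskerRight_comp,
      Bicategory.Strict.associator_eqToIso, eqToIso.hom, eqToIso.inv,
      Bicategory.whiskerLeft_eqToHom, Bicategory.eqToHom_whiskerRight,
      eqToHom_trans, eqToHom_refl, eqToHom_trans_assoc, Category.assoc,
      Category.comp_id, Category.id_comp]
  rw [hπ]
  trans (eqToHom (show T.map (f ≫ f') ≫ ℬ'.a ≫ t = T.map f ≫ (T.map f' ≫ ℬ'.a ≫ t) by
        simp [T.map_comp]) ≫
      (T.map f ◁
        (eqToHom (show T.map f' ≫ ℬ'.a ≫ t = (T.map f' ≫ ℬ'.a) ≫ t by simp) ≫ (φ' ▷ t) ≫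
          eqToHom (show (ℬ.a ≫ f') ≫ t = ℬ.a ≫ f' ≫ t by simp) ≫ (ℬ.a ◁ θ) ≫
          eqToHom (show ℬ.a ≫ s ≫ g' = (ℬ.a ≫ s) ≫ g' by simp) ≫ (σ ▷ g') ≫
          eqToHom (show (T.map s ≫ 𝒟.a) ≫ g' = T.map s ≫ 𝒟.a ≫ g' by simp))) ≫
      eqToHom (show T.map f ≫ T.map s ≫ 𝒟.a ≫ g' = (T.map (f ≫ s) ≫ 𝒟.a) ≫ g' by
        simp [T.map_comp]) ≫
      ((T.map₂ π ▷ 𝒟.a) ▷ g') ≫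
      eqToHom (show (T.map (r ≫ g) ≫ 𝒟.a) ≫ g' = (T.map r ≫ T.map g ≫ 𝒟.a) ≫ g' by
        simp [T.map_comp]) ≫
      ((T.map r ◁ γ) ▷ g') ≫
      eqToHom (show (T.map r ≫ 𝒞.a ≫ g) ≫ g' = T.map r ≫ 𝒞.a ≫ (g ≫ g') by simp))
  · simp only [Bicategory.whiskerLeft_comp, Bicategory.comp_whiskerRight,
      Bicategory.comp_whiskerLeft, Bicategory.whisker_assoc, Bicategory.whiskerRight_comp,
      Bicategory.Strict.associator_eqToIso, eqToIso.hom, eqToIso.inv,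
      Bicategory.whiskerLeft_eqToHom, Bicategory.eqToHom_whiskerRight,
      eqToHom_trans, eqToHom_refl, eqToHom_trans_assoc, Category.assoc,
      Category.comp_id, Category.id_comp]
  rw [hθ]
  trans (eqToHom (show T.map (f ≫ f') ≫ ℬ'.a ≫ t = T.map f ≫ (T.map f' ≫ ℬ'.a ≫ t) by
        simp [T.map_comp]) ≫
      (T.map f ◁ (T.map f' ◁ τ)) ≫
      eqToHom (show T.map f ≫ T.map f' ≫ T.map t ≫ 𝒟'.a
          = T.map f ≫ (T.map (f' ≫ t) ≫ 𝒟'.a) by simp [T.map_comp]) ≫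
      (T.map f ◁ (T.map₂ θ ▷ 𝒟'.a)) ≫
      eqToHom (show T.map f ≫ T.map (s ≫ g') ≫ 𝒟'.a
          = (T.map f ≫ T.map s) ≫ (T.map g' ≫ 𝒟'.a) by simp [T.map_comp]) ≫
      (((T.map f ≫ T.map s) ◁ γ') ≫
        ((eqToHom (T.map_comp f s).symm ≫ T.map₂ π ≫ eqToHom (T.map_comp r g)) ▷
          (𝒟.a ≫ g'))) ≫
      eqToHom (show (T.map r ≫ T.map g) ≫ (𝒟.a ≫ g')
          = (T.map r ≫ T.map g ≫ 𝒟.a) ≫ g' by simp) ≫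
      ((T.map r ◁ γ) ▷ g') ≫
      eqToHom (show (T.map r ≫ 𝒞.a ≫ g) ≫ g' = T.map r ≫ 𝒞.a ≫ (g ≫ g') by simp))
  · simp only [Bicategory.whiskerLeft_comp, Bicategory.comp_whiskerRight,
      Bicategory.comp_whiskerLeft, Bicategory.whisker_assoc, Bicategory.whiskerRight_comp,
      Bicategory.Strict.associator_eqToIso, eqToIso.hom, eqToIso.inv,
      Bicategory.whiskerLeft_eqToHom, Bicategory.eqToHom_whiskerRight,
      eqToHom_trans, eqToHom_refl, eqToHom_trans_assoc, Category.assoc,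
      Category.comp_id, Category.id_comp]
  rw [whisker_exchange]
  simp only [Bicategory.whiskerLeft_comp, Bicategory.comp_whiskerRight,
    Bicategory.comp_whiskerLeft, Bicategory.whisker_assoc, Bicategory.whiskerRight_comp,
    Bicategory.Strict.associator_eqToIso, eqToIso.hom, eqToIso.inv,
    Bicategory.whiskerLeft_eqToHom, Bicategory.eqToHom_whiskerRight,
    eqToHom_trans, eqToHom_refl, eqToHom_trans_assoc, Category.assoc,
    Category.comp_id, Category.id_comp]
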